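/- Let μ = (μ_t)_{t∈[0,1]} be a curve in P₂(ℝᵈ) and Γ a probability measure on C([0,1], ℝᵈ) with time marginals μ_t. Then the action A(Γ) = ∫ E(γ) dΓ(γ) satisfies A(Γ) ≥ E(μ), where E(μ) is the energy of the curve t ↦ μ_t in the Wasserstein space (P₂(ℝᵈ), W₂). -/

import Mathlib

open Set MeasureTheory Filter
open scoped ENNReal

/-- `π` is a coupling of `μ` and `ν`. -/
def IsCoupling {E : Type*} [MeasurableSpace E] (π : Measure (E × E)) (μ ν : Measure E) : Prop :=
  π.map Prod.fst = μ ∧ π.map Prod.snd = ν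

/-- The quadratic transport cost `∫ ‖y - x‖² dπ(x,y)` of a plan `π`. -/
noncomputable def transportCost {E : Type*} [NormedAddCommGroup E] [MeasurableSpace E]
    (π : Measure (E × E)) : ℝ≥0∞ :=
  ∫⁻ p, ENNReal.ofReal (‖p.2 - p.1‖ ^ 2) ∂π

/-- The squared 2-Wasserstein distance: infimum of the quadratic cost over all couplings. -/
noncomputable def W2sq {E : Type*} [NormedAddCommGroup E] [MeasurableSpace E]
    (μ ν : Measure E) : ℝ≥0∞ :=
  ⨅ (π : Measure (E × E)) (_ : IsCoupling π μ ν), transportCost π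

/-- Energy sum of a curve along the partition points `r 0 < r 1 < ... < r (m+1)`. -/
noncomputable def energySum {X : Type*} [MetricSpace X] (γ : ℝ → X) {m : ℕ}
    (r : Fin (m + 2) → ℝ) : ℝ :=
  ∑ k : Fin (m + 1), dist (γ (r k.castSucc)) (γ (r k.succ)) ^ 2 / (r k.succ - r k.castSucc)

/-- `r` enumerates a partition `0 = r 0 < r 1 < ... < r (m+1) = 1` of `[0, 1]`. -/
def IsPartition {m : ℕ} (r : Fin (m + 2) → ℝ) : Prop :=
  StrictMono r ∧ r 0 = 0 ∧ r (Fin.last (m + 1)) = 1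

/-- The energy of a curve on `[0,1]`: supremum of the energy sums over all partitions. -/
noncomputable def energy {X : Type*} [MetricSpace X] (γ : ℝ → X) : ℝ≥0∞ :=
  ⨆ (m : ℕ) (r : Fin (m + 2) → ℝ) (_ : IsPartition r), ENNReal.ofReal (energySum γ r)

/-- The energy of a curve of measures in the Wasserstein space `(P₂, W₂)`. -/
noncomputable def energyW2 {E : Type*} [NormedAddCommGroup E] [MeasurableSpace E]
    (μ : ℝ → Measure E) : ℝ≥0∞ :=
  ⨆ (m : ℕ) (r : Fin (m + 2) → ℝ) (_ : IsPartition r),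
    ∑ k : Fin (m + 1),
      W2sq (μ (r k.castSucc)) (μ (r k.succ)) / ENNReal.ofReal (r k.succ - r k.castSucc)

/-!
For `s < t` the law of `γ ↦ (γ s, γ t)` under `Γ` couples `μ s` and `μ t`, so
`W₂²(μ s, μ t) ≤ ∫ |γ s - γ t|² dΓ`. Summing over a partition bounds each Wasserstein energy
sum by the `Γ`-integral of the pathwise energy sum, hence by `A(Γ)`. The supremum over partitions
is then taken on the left only, so instead of monotone convergence it suffices that the lower
Lebesgue integral is monotone and superadditive.
-/

section

variable {α E : Type*} [MeasurableSpace α] [MeasurableSpace E]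

theorem MeasureTheory.le_lintegral_finsetSum {ι : Type*} (μ : Measure α) (s : Finset ι)
    (f : ι → α → ℝ≥0∞) : ∑ i ∈ s, ∫⁻ a, f i a ∂μ ≤ ∫⁻ a, ∑ i ∈ s, f i a ∂μ := by
  classical
  induction s using Finset.induction_on with
  | empty => simp
  | insert i s hi ih =>
    simp only [Finset.sum_insert hi]
    exact (add_le_add le_rfl ih).trans (le_lintegral_add _ _)

theorem isCoupling_map_prodMk (μ : Measure α) {f g : α → E} (hf : Measurable f)
    (hg : Measurable g) : IsCoupling (μ.map fun x => (f x, g x)) (μ.map f) (μ.map g) :=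
  ⟨by rw [Measure.map_map measurable_fst (hf.prodMk hg)]; rfl,
    by rw [Measure.map_map measurable_snd (hf.prodMk hg)]; rfl⟩

variable [NormedAddCommGroup E]

theorem W2sq_map_le_lintegral (μ : Measure α) {f g : α → E} (hf : Measurable f)
    (hg : Measurable g) :
    W2sq (μ.map f) (μ.map g) ≤ ∫⁻ x, ENNReal.ofReal (dist (f x) (g x) ^ 2) ∂μ :=
  calc W2sq (μ.map f) (μ.map g) ≤ transportCost (μ.map fun x => (f x, g x)) :=
        iInf_le_of_le _ (iInf_le _ (isCoupling_map_prodMk μ hf hg))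
    _ ≤ ∫⁻ x, ENNReal.ofReal (‖g x - f x‖ ^ 2) ∂μ := lintegral_map_le _ _
    _ = ∫⁻ x, ENNReal.ofReal (dist (f x) (g x) ^ 2) ∂μ := by
        simp only [dist_eq_norm', norm_sub_rev]

theorem W2sq_map_div_le_lintegral (μ : Measure α) {f g : α → E} (hf : Measurable f)
    (hg : Measurable g) {c : ℝ} (hc : 0 < c) :
    W2sq (μ.map f) (μ.map g) / ENNReal.ofReal c
      ≤ ∫⁻ x, ENNReal.ofReal (dist (f x) (g x) ^ 2 / c) ∂μ := by
  have hc_inv : (ENNReal.ofReal c)⁻¹ ≠ ⊤ := ENNReal.inv_ne_top.mpr (ENNReal.ofReal_pos.mpr hc).ne'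
  simp_rw [ENNReal.ofReal_div_of_pos hc, div_eq_mul_inv]
  rw [lintegral_mul_const' _ _ hc_inv]
  gcongr
  exact W2sq_map_le_lintegral μ hf hg

end

namespace IsPartition

variable {m : ℕ} {r : Fin (m + 2) → ℝ}

theorem mem_Icc (hr : IsPartition r) (k : Fin (m + 2)) : r k ∈ Icc (0 : ℝ) 1 :=
  ⟨hr.2.1 ▸ hr.1.monotone (Fin.zero_le k), hr.2.2 ▸ hr.1.monotone (Fin.le_last k)⟩

theorem sub_pos (hr : IsPartition r) (k : Fin (m + 1)) : 0 < r k.succ - r k.castSucc :=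
  _root_.sub_pos.mpr (hr.1 k.castSucc_lt_succ)

theorem ofReal_energySum_le_energy {X : Type*} [MetricSpace X] (hr : IsPartition r)
    (γ : ℝ → X) : ENNReal.ofReal (energySum γ r) ≤ energy γ :=
  le_iSup_of_le m (le_iSup_of_le r (le_iSup_of_le hr le_rfl))

theorem ofReal_energySum_eq_sum {X : Type*} [MetricSpace X] (hr : IsPartition r)
    (γ : ℝ → X) : ENNReal.ofReal (energySum γ r) = ∑ k : Fin (m + 1),
      ENNReal.ofReal (dist (γ (r k.castSucc)) (γ (r k.succ)) ^ 2 / (r k.succ - r k.castSucc)) :=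
  ENNReal.ofReal_sum_of_nonneg fun k _ => div_nonneg (sq_nonneg _) (hr.sub_pos k).le

end IsPartition

theorem sum_W2sq_div_le_lintegral_energySum {E : Type*} [NormedAddCommGroup E]
    [MeasurableSpace E] (Γ : Measure (ℝ → E)) {m : ℕ} {r : Fin (m + 2) → ℝ}
    (hr : IsPartition r) :
    ∑ k : Fin (m + 1), W2sq (Γ.map fun γ => γ (r k.castSucc)) (Γ.map fun γ => γ (r k.succ))
        / ENNReal.ofReal (r k.succ - r k.castSucc)
      ≤ ∫⁻ γ, ENNReal.ofReal (energySum γ r) ∂Γ :=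
  calc _ ≤ ∑ k : Fin (m + 1), ∫⁻ γ, ENNReal.ofReal
          (dist (γ (r k.castSucc)) (γ (r k.succ)) ^ 2 / (r k.succ - r k.castSucc)) ∂Γ :=
        Finset.sum_le_sum fun k _ => W2sq_map_div_le_lintegral Γ (measurable_pi_apply _)
          (measurable_pi_apply _) (hr.sub_pos k)
    _ ≤ _ := by
        simp only [hr.ofReal_energySum_eq_sum]
        exact le_lintegral_finsetSum Γ _ _

theorem stmt_13_general (d : ℕ) (μ : ℝ → Measure (EuclideanSpace ℝ (Fin d)))
    (Γ : Measure (ℝ → EuclideanSpace ℝ (Fin d)))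
    (hmarg : ∀ t ∈ Icc (0 : ℝ) 1, Γ.map (fun γ => γ t) = μ t) :
    energyW2 μ ≤ ∫⁻ γ, energy γ ∂Γ := by
  refine iSup_le fun m => iSup₂_le fun r hr => ?_
  calc ∑ k : Fin (m + 1), W2sq (μ (r k.castSucc)) (μ (r k.succ))
          / ENNReal.ofReal (r k.succ - r k.castSucc)
      = ∑ k : Fin (m + 1), W2sq (Γ.map fun γ => γ (r k.castSucc))
          (Γ.map fun γ => γ (r k.succ)) / ENNReal.ofReal (r k.succ - r k.castSucc) := by
        simp only [hmarg _ (hr.mem_Icc _)]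
    _ ≤ ∫⁻ γ, ENNReal.ofReal (energySum γ r) ∂Γ := sum_W2sq_div_le_lintegral_energySum Γ hr
    _ ≤ ∫⁻ γ, energy γ ∂Γ := lintegral_mono fun γ => hr.ofReal_energySum_le_energy γ

/-- The action of a law `Γ` on `C([0,1], ℝᵈ)` with time marginals `μ t` dominates the
Wasserstein energy of the marginal curve: `A(Γ) = ∫ E(γ) dΓ(γ) ≥ E(μ)`. -/
theorem stmt_13 (d : ℕ) (μ : ℝ → Measure (EuclideanSpace ℝ (Fin d)))
    (hμprob : ∀ t, IsProbabilityMeasure (μ t))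
    (hμ2 : ∀ t, ∫⁻ x, ENNReal.ofReal (‖x‖ ^ 2) ∂(μ t) ≠ ⊤)
    (Γ : Measure (ℝ → EuclideanSpace ℝ (Fin d))) [IsProbabilityMeasure Γ]
    (hcont : ∀ᵐ γ ∂Γ, ContinuousOn γ (Icc (0 : ℝ) 1))
    (hmarg : ∀ t ∈ Icc (0 : ℝ) 1, Γ.map (fun γ => γ t) = μ t) :
    energyW2 μ ≤ ∫⁻ γ, energy γ ∂Γ :=
  stmt_13_general d μ Γ hmarg
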